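/- Let (Ω, F, P) be a probability space, A ∈ F an event, c₁, c₂ ≥ 0 real constants, and X, Y, X̂, Ŷ : Ω → ℝ random variables such that |X| ≤ c₁, |X̂| ≤ c₁, |Y| ≤ c₂, |Ŷ| ≤ c₂ almost surely, X̂ and Ŷ are independent, X has the same distribution as X̂, Y has the same distribution as Ŷ, and on the complement of A one has X = X̂ and Y = Ŷ pointwise. Then |E[X·Y] − E[X]·E[Y]| ≤ 2 c₁ c₂ P(A). -/

import Mathlib

open MeasureTheory ProbabilityTheory

/-! The independent copy `(X̂, Ŷ)` has the same product of means as `(X, Y)` and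
`E[X̂Ŷ] = E[X̂] E[Ŷ]`, so the covariance of `X` and `Y` is `E[XY − X̂Ŷ]`. The integrand vanishes
off `A` and is bounded by `2 c₁ c₂` on `A`. -/

section

variable {Ω : Type*} [MeasurableSpace Ω] {μ : Measure Ω}

theorem norm_mul_sub_mul_le {R : Type*} [NonUnitalSeminormedRing R] {a b a' b' : R} {r s : ℝ}
    (ha : ‖a‖ ≤ r) (hb : ‖b‖ ≤ s) (ha' : ‖a'‖ ≤ r) (hb' : ‖b'‖ ≤ s) :
    ‖a * b - a' * b'‖ ≤ 2 * r * s :=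
  calc ‖a * b - a' * b'‖ ≤ ‖a * b‖ + ‖a' * b'‖ := norm_sub_le _ _
    _ ≤ r * s + r * s := add_le_add (norm_mul_le_of_le ha hb) (norm_mul_le_of_le ha' hb')
    _ = 2 * r * s := by ring

theorem norm_integral_le_of_eq_zero_off {E : Type*} [NormedAddCommGroup E] [NormedSpace ℝ E]
    {f : Ω → E} {s : Set Ω} {C : ℝ} (hs : μ s < ⊤) (hC : ∀ᵐ ω ∂μ, ‖f ω‖ ≤ C)
    (hf : ∀ ω ∉ s, f ω = 0) : ‖∫ ω, f ω ∂μ‖ ≤ C * μ.real s := by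
  rw [← setIntegral_eq_integral_of_forall_compl_eq_zero hf]
  exact norm_setIntegral_le_of_norm_le_const_ae' hs (hC.mono fun _ h _ => h)

theorem integral_mul_sub_mul_integral_eq_of_identDistrib {𝕜 : Type*} [RCLike 𝕜]
    {X Y X' Y' : Ω → 𝕜} (hXY : Integrable (X * Y) μ) (hXY' : Integrable (X' * Y') μ)
    (hind : IndepFun X' Y' μ) (hX : IdentDistrib X X' μ μ) (hY : IdentDistrib Y Y' μ μ) :
    μ[X * Y] - μ[X] * μ[Y] = μ[X * Y - X' * Y'] := by
  rw [integral_sub' hXY hXY', hX.integral_eq, hY.integral_eq,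
    hind.integral_mul_eq_mul_integral hX.aemeasurable_snd.aestronglyMeasurable
      hY.aemeasurable_snd.aestronglyMeasurable]

end

theorem abs_cov_le_of_coupling_general
    {Ω : Type*} [MeasurableSpace Ω] (μ : Measure Ω) [IsProbabilityMeasure μ]
    (A : Set Ω)
    (c₁ c₂ : ℝ)
    (X Y Xhat Yhat : Ω → ℝ)
    (hXb : ∀ᵐ ω ∂μ, |X ω| ≤ c₁) (hXhatb : ∀ᵐ ω ∂μ, |Xhat ω| ≤ c₁)
    (hYb : ∀ᵐ ω ∂μ, |Y ω| ≤ c₂) (hYhatb : ∀ᵐ ω ∂μ, |Yhat ω| ≤ c₂)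
    (hindep : IndepFun Xhat Yhat μ)
    (hXd : IdentDistrib X Xhat μ μ) (hYd : IdentDistrib Y Yhat μ μ)
    (hcoupling : ∀ ω ∉ A, X ω = Xhat ω ∧ Y ω = Yhat ω) :
    |μ[fun ω => X ω * Y ω] - μ[X] * μ[Y]| ≤ 2 * c₁ * c₂ * (μ A).toReal := by
  have hXY : Integrable (X * Y) μ :=
    .of_bound (hXd.aemeasurable_fst.mul hYd.aemeasurable_fst).aestronglyMeasurable (c₁ * c₂)
      (by filter_upwards [hXb, hYb] with ω hx hy using norm_mul_le_of_le hx hy)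
  have hXY' : Integrable (Xhat * Yhat) μ :=
    .of_bound (hXd.aemeasurable_snd.mul hYd.aemeasurable_snd).aestronglyMeasurable (c₁ * c₂)
      (by filter_upwards [hXhatb, hYhatb] with ω hx hy using norm_mul_le_of_le hx hy)
  have hdiff : ∀ᵐ ω ∂μ, ‖X ω * Y ω - Xhat ω * Yhat ω‖ ≤ 2 * c₁ * c₂ := by
    filter_upwards [hXb, hYb, hXhatb, hYhatb] with ω hx hy hx' hy'
    exact norm_mul_sub_mul_le hx hy hx' hy'
  have hvanish : ∀ ω ∉ A, X ω * Y ω - Xhat ω * Yhat ω = 0 := fun ω hω => by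
    rw [(hcoupling ω hω).1, (hcoupling ω hω).2, sub_self]
  change |μ[X * Y] - μ[X] * μ[Y]| ≤ _
  rw [integral_mul_sub_mul_integral_eq_of_identDistrib hXY hXY' hindep hXd hYd]
  exact norm_integral_le_of_eq_zero_off (measure_lt_top μ A) hdiff hvanish

/-- Decoupling by coupling: if `X, Y` agree off an event `A` with an independent pair
`X̂, Ŷ` having the same marginal distributions, and all four variables are bounded by
`c₁` resp. `c₂`, then `|E[XY] − E[X]E[Y]| ≤ 2 c₁ c₂ P(A)`. -/
theorem abs_cov_le_of_coupling
    {Ω : Type*} [MeasurableSpace Ω] (μ : Measure Ω) [IsProbabilityMeasure μ]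
    (A : Set Ω) (hA : MeasurableSet A)
    (c₁ c₂ : ℝ) (hc₁ : 0 ≤ c₁) (hc₂ : 0 ≤ c₂)
    (X Y Xhat Yhat : Ω → ℝ)
    (hX : Measurable X) (hY : Measurable Y)
    (hXhat : Measurable Xhat) (hYhat : Measurable Yhat)
    (hXb : ∀ᵐ ω ∂μ, |X ω| ≤ c₁) (hXhatb : ∀ᵐ ω ∂μ, |Xhat ω| ≤ c₁)
    (hYb : ∀ᵐ ω ∂μ, |Y ω| ≤ c₂) (hYhatb : ∀ᵐ ω ∂μ, |Yhat ω| ≤ c₂)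
    (hindep : IndepFun Xhat Yhat μ)
    (hXd : IdentDistrib X Xhat μ μ) (hYd : IdentDistrib Y Yhat μ μ)
    (hcoupling : ∀ ω ∉ A, X ω = Xhat ω ∧ Y ω = Yhat ω) :
    |μ[fun ω => X ω * Y ω] - μ[X] * μ[Y]| ≤ 2 * c₁ * c₂ * (μ A).toReal :=
  abs_cov_le_of_coupling_general μ A c₁ c₂ X Y Xhat Yhat hXb hXhatb hYb hYhatb hindep hXd hYd
    hcoupling
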